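/- arXiv:2604.20054 — 5 statements merged into one kernel-verified Lean document; each statement's English description precedes it below -/
import Mathlib

section
/- In a commutative ring A of characteristic p, if a ∈ A satisfies a^p = 0, then the sequence defined by a_n = a^n / n! for n < p (i.e., the unique element with n! * a_n = a^n, given by explicit construction using that n! is invertible mod p for n < p) and a_n = 0 for n ≥ p is a divided power sequence: a_0 = 1, a_1 = a, and binom(n+m, n) * a_{n+m} = a_n * a_m for all n, m. -/
/-!
In a commutative ring, any family `c` of inverses of `n!` for `n < N` turns the truncation of
`∑ c n * a ^ n` at `N` into a divided power sequence on `a` as soon as `a ^ N = 0`: below `N` the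
identity `choose (n + m) n * c (n + m) = c n * c m` follows by clearing the factorials, and at or
above `N` both sides vanish because `a ^ (n + m) = 0`. In characteristic `p` the residues of the
inverses of `n!` in `ZMod p` provide such a family for `N = p`.
-/

open Nat

section TruncatedExp

variable {A : Type*} [CommRing A] {N : ℕ} {c : ℕ → A}

def truncExpSeq (N : ℕ) (c : ℕ → A) (a : A) (n : ℕ) : A :=
  if n < N then c n * a ^ n else 0

theorem choose_add_mul_eq_mul_of_factorial_mul_eq_one (hc : ∀ n < N, (n ! : A) * c n = 1)
    {n m : ℕ} (h : n + m < N) : ((n + m).choose n : A) * c (n + m) = c n * c m := by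
  have hn : (n ! : A) * c n = 1 := hc n (by omega)
  have hm : (m ! : A) * c m = 1 := hc m (by omega)
  have hnm : ((n + m).choose n : A) * n ! * m ! = (n + m)! := by
    rw [Nat.choose_symm_add, ← Nat.cast_mul, ← Nat.cast_mul,
      Nat.add_choose_mul_factorial_mul_factorial]
  calc ((n + m).choose n : A) * c (n + m)
      = ((n + m).choose n : A) * n ! * m ! * c (n + m) * (c n * c m) := by
        linear_combination (-(((n + m).choose n : A) * c (n + m))) * (hn + ((n ! : A) * c n) * hm)
    _ = c n * c m := by rw [hnm, hc _ h, one_mul]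

theorem truncExpSeq_zero (hc : ∀ n < N, (n ! : A) * c n = 1) (hN : 0 < N) (a : A) :
    truncExpSeq N c a 0 = 1 := by
  simpa [truncExpSeq, hN] using hc 0 hN

theorem truncExpSeq_one (hc : ∀ n < N, (n ! : A) * c n = 1) (hN : 1 < N) (a : A) :
    truncExpSeq N c a 1 = a := by
  simpa [truncExpSeq, hN] using congrArg (· * a) (hc 1 hN)

theorem choose_mul_truncExpSeq_add (hc : ∀ n < N, (n ! : A) * c n = 1) {a : A}
    (ha : a ^ N = 0) (n m : ℕ) :
    ((n + m).choose n : A) * truncExpSeq N c a (n + m) =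
      truncExpSeq N c a n * truncExpSeq N c a m := by
  by_cases h : n + m < N
  · simp only [truncExpSeq, if_pos h, if_pos (show n < N by omega), if_pos (show m < N by omega)]
    rw [← mul_assoc, choose_add_mul_eq_mul_of_factorial_mul_eq_one hc h, pow_add]
    ring
  · have hpow : a ^ (n + m) = 0 := pow_eq_zero_of_le (not_lt.mp h) ha
    simp only [truncExpSeq, if_neg h, mul_zero]
    split_ifs <;> simp [mul_mul_mul_comm, ← pow_add, hpow]

end TruncatedExp

theorem ZMod.natCast_factorial_mul_val_inv {p : ℕ} [Fact p.Prime] {A : Type*} [CommRing A]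
    [CharP A p] {n : ℕ} (hn : n < p) : (n ! : A) * ((n ! : ZMod p)⁻¹.val : A) = 1 := by
  have hne : (n ! : ZMod p) ≠ 0 := ((IsUnit.natCast_factorial_iff_of_charP p).mpr hn).ne_zero
  rw [ZMod.natCast_val, ← ZMod.cast_natCast' (n !), ← ZMod.cast_mul', mul_inv_cancel₀ hne,
    ZMod.cast_one']

/-- If `a ^ p = 0` in a commutative ring of characteristic `p`, then the sequence
`a_n = a^n / n!` for `n < p` (defined using the inverse of `n!` in `ZMod p`)
and `a_n = 0` for `n ≥ p` is a divided power sequence on `a`. -/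
theorem pd_seq_of_pow_p_eq_zero {p : ℕ} (hp : p.Prime)
    (A : Type*) [CommRing A] [CharP A p] (a : A) (ha : a ^ p = 0)
    (s : ℕ → A)
    (hs : s = fun n => if n < p then ((((n.factorial : ZMod p))⁻¹.val : A) * a ^ n) else 0) :
    s 0 = 1 ∧ s 1 = a ∧
      ∀ n m : ℕ, (Nat.choose (n + m) n : A) * s (n + m) = s n * s m := by
  have : Fact p.Prime := ⟨hp⟩
  have hc : ∀ n < p, (n ! : A) * ((n ! : ZMod p)⁻¹.val : A) = 1 :=
    fun _ hn => ZMod.natCast_factorial_mul_val_inv hn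
  subst hs
  exact ⟨truncExpSeq_zero hc hp.pos a, truncExpSeq_one hc hp.one_lt a,
    choose_mul_truncExpSeq_add hc ha⟩
end

section
/- If (a_n)_{n≥0} is a divided power sequence on an element a in a commutative ring A of characteristic p, then the sequence (b_n) defined by b_n = a_{n/p} if p divides n and b_n = 0 otherwise, is a divided power sequence on b_1 = 0; that is, b_0 = 1 and binom(n+m, n) * b_{n+m} = b_n * b_m for all n, m. -/
lemma cast_eq_of_modeq {p : ℕ} (A : Type*) [NonAssocSemiring A] [CharP A p]
    {x y : ℕ} (h : x ≡ y [MOD p]) : (x : A) = (y : A) := by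
  calc (x : A) = ((x % p + p * (x / p) : ℕ) : A) := by rw [Nat.mod_add_div]
    _ = (x % p : ℕ) + (p : A) * (x / p : ℕ) := by push_cast; ring
    _ = (y % p : ℕ) + (p : A) * (y / p : ℕ) := by
        rw [Nat.ModEq] at h; rw [CharP.cast_eq_zero A p, h, zero_mul, zero_mul]
    _ = ((y % p + p * (y / p) : ℕ) : A) := by push_cast; ring
    _ = y := by rw [Nat.mod_add_div]

/-- If `(s n)` is a divided power sequence on `a` in characteristic `p`, then
`b n = s (n / p)` if `p ∣ n` and `b n = 0` otherwise is a divided power sequence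
on `b 1 = 0`. -/
theorem verschiebung_pd_seq {p : ℕ} (hp : p.Prime)
    (A : Type*) [CommRing A] [CharP A p] (a : A) (s : ℕ → A)
    (h0 : s 0 = 1) (h1 : s 1 = a)
    (hmul : ∀ n m : ℕ, (Nat.choose (n + m) n : A) * s (n + m) = s n * s m)
    (b : ℕ → A) (hb : b = fun n => if p ∣ n then s (n / p) else 0) :
    b 0 = 1 ∧ b 1 = 0 ∧
      ∀ n m : ℕ, (Nat.choose (n + m) n : A) * b (n + m) = b n * b m := by
  have : Fact p.Prime := ⟨hp⟩
  have hppos : 0 < p := hp.pos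
  subst hb
  refine ⟨by simp [h0, hppos.ne'], by simp [Nat.dvd_one, hp.ne_one], ?_⟩
  intro n m
  by_cases hn : p ∣ n
  · by_cases hm : p ∣ m
    · obtain ⟨k, rfl⟩ := hn
      obtain ⟨l, rfl⟩ := hm
      have hnm : p ∣ p * k + p * l := ⟨k + l, by ring⟩
      simp only [hnm, Dvd.intro k rfl, Dvd.intro l rfl, if_pos]
      have hd : (p * k + p * l) / p = k + l := by
        rw [← Nat.mul_add, Nat.mul_div_cancel_left _ hppos]
      have hd1 : p * k / p = k := Nat.mul_div_cancel_left _ hppos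
      have hd2 : p * l / p = l := Nat.mul_div_cancel_left _ hppos
      rw [hd, hd1, hd2, ← hmul k l]
      congr 1
      refine cast_eq_of_modeq (p := p) A ?_
      have := Choose.choose_modEq_choose_mod_mul_choose_div_nat
        (n := p * k + p * l) (k := p * k) (p := p)
      simpa [Nat.mul_add_mod, Nat.mul_mod_right, hd, hd1] using this
    · have hnm : ¬ p ∣ n + m := fun h => hm ((Nat.dvd_add_right hn).mp h)
      simp [hnm, hm]
  · have hrhs : (if p ∣ n then s (n / p) else 0) * (if p ∣ m then s (m / p) else 0) = 0 := by
      simp [hn]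
    rw [hrhs]
    by_cases hnm : p ∣ n + m
    · simp only [hnm, if_true]
      have hc : (Nat.choose (n + m) n : A) = (0 : A) := by
        have hl := Choose.choose_modEq_choose_mod_mul_choose_div_nat
          (n := n + m) (k := n) (p := p)
        have e1 : (n + m) % p = 0 := Nat.mod_eq_zero_of_dvd hnm
        have e2 : n % p ≠ 0 := fun h => hn (Nat.dvd_of_mod_eq_zero h)
        have e3 : Nat.choose ((n + m) % p) (n % p) = 0 := by
          rw [e1]; exact Nat.choose_eq_zero_of_lt (Nat.pos_of_ne_zero e2)
        have := cast_eq_of_modeq (p := p) A hl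
        rw [this, e3]
        simp
      rw [hc, zero_mul]
    · simp [hnm]
end

section
/- A divided power sequence (a_n)_{n≥0} on an element of a commutative ring of characteristic p is uniquely determined by its values a_{pn} on multiples of p. Concretely: if (a_n) and (b_n) are divided power sequences with a_{pn} = b_{pn} for all n, then a_n = b_n for all n. -/
/-!
Taking `m = 1` in the product rule gives `(k + 1) • a_{k+1} = a_k * a_1`. When `p ∤ k + 1` the
scalar `k + 1` is a unit in characteristic `p`, so `a_{k+1}` is recovered from `a_k` and `a_1`;
when `p ∣ k + 1` it is one of the prescribed values. Induction on `k` finishes the proof.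
-/

theorem natCast_succ_mul_eq_mul_one {A : Type*} [CommRing A] {s : ℕ → A}
    (hmul : ∀ n m : ℕ, (Nat.choose (n + m) n : A) * s (n + m) = s n * s m) (k : ℕ) :
    ((k + 1 : ℕ) : A) * s (k + 1) = s k * s 1 := by
  simpa only [Nat.choose_succ_self_right] using hmul k 1

theorem eq_of_succ_mul_eq_mul_one_of_eqOn_mul {p : ℕ} (hp : p.Prime)
    {A : Type*} [CommRing A] [CharP A p] {s t : ℕ → A}
    (hs : ∀ k : ℕ, ((k + 1 : ℕ) : A) * s (k + 1) = s k * s 1)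
    (ht : ∀ k : ℕ, ((k + 1 : ℕ) : A) * t (k + 1) = t k * t 1)
    (h1 : s 1 = t 1) (hmult : ∀ n : ℕ, s (p * n) = t (p * n)) :
    s = t := by
  funext n
  induction n with
  | zero => simpa only [mul_zero] using hmult 0
  | succ k ih =>
    by_cases hdvd : p ∣ k + 1
    · obtain ⟨m, hm⟩ := hdvd
      rw [hm]
      exact hmult m
    · have hunit : IsUnit ((k + 1 : ℕ) : A) := (CharP.isUnit_natCast_iff hp).2 hdvd
      exact hunit.mul_left_cancel (by rw [hs, ht, ih, h1])

theorem pd_seq_determined_by_multiples_of_p_general {p : ℕ} (hp : p.Prime)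
    (A : Type*) [CommRing A] [CharP A p] (s t : ℕ → A)
    (hsmul : ∀ n m : ℕ, (Nat.choose (n + m) n : A) * s (n + m) = s n * s m)
    (htmul : ∀ n m : ℕ, (Nat.choose (n + m) n : A) * t (n + m) = t n * t m)
    (h1 : s 1 = t 1)
    (hmult : ∀ n : ℕ, s (p * n) = t (p * n)) :
    ∀ n : ℕ, s n = t n :=
  congrFun (eq_of_succ_mul_eq_mul_one_of_eqOn_mul hp (natCast_succ_mul_eq_mul_one hsmul)
    (natCast_succ_mul_eq_mul_one htmul) h1 hmult)

/-- A divided power sequence on an element of a commutative ring of characteristic `p`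
is determined by its values on multiples of `p`: if `(s n)` and `(t n)` are divided power
sequences on the same element, agreeing at all indices `p * n`, then they agree everywhere. -/
theorem pd_seq_determined_by_multiples_of_p {p : ℕ} (hp : p.Prime)
    (A : Type*) [CommRing A] [CharP A p] (s t : ℕ → A)
    (hs0 : s 0 = 1)
    (hsmul : ∀ n m : ℕ, (Nat.choose (n + m) n : A) * s (n + m) = s n * s m)
    (ht0 : t 0 = 1)
    (htmul : ∀ n m : ℕ, (Nat.choose (n + m) n : A) * t (n + m) = t n * t m)
    (h1 : s 1 = t 1)
    (hmult : ∀ n : ℕ, s (p * n) = t (p * n)) :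
    ∀ n : ℕ, s n = t n :=
  pd_seq_determined_by_multiples_of_p_general hp A s t hsmul htmul h1 hmult
end

section
/- The set of pairs (a, (a_n)) where (a_n) is a nilpotent divided power sequence on a in a commutative ring A of characteristic p forms an abelian group under the operation (a_•) + (b_•) := (c_n) with c_n = Σ_{i+j=n} a_i * b_j; that is, the convolution of two nilpotent divided power sequences is a nilpotent divided power sequence, convolution is commutative and associative, the sequence (1,0,0,...) is an identity, and every element has an inverse. -/
/-!
The relation `(n+m).choose n * a (n+m) = a n * a m` says that the generating series of `a`
behaves like `exp (x X)`. When `a` is the coefficient sequence of a polynomial `P`, it is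
equivalent to `hasseDeriv n P = a n • P`,
and the Leibniz rule for Hasse derivatives transfers this to `P * Q`, whose coefficients are the
convolution of those of `P` and `Q`. Commutativity, associativity and the unit come from the
power series ring. The relation also gives `a (u X) * a (v X) = a ((u + v) X)`, so at `u = 1`,
`v = -1` the sequence `(-1)^n a n` is an inverse of `a`, since `a 0 = 1`.
-/

open Polynomial PowerSeries

section

variable {A : Type*} [CommRing A]

def convolution (a b : ℕ → A) : ℕ → A :=
  fun n => ∑ i ∈ Finset.range (n + 1), a i * b (n - i)

theorem PowerSeries.mk_injective : Function.Injective (mk : (ℕ → A) → A⟦X⟧) :=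
  fun a b h => funext fun n => by simpa using congrArg (PowerSeries.coeff n) h

theorem PowerSeries.mk_convolution (a b : ℕ → A) : mk (convolution a b) = mk a * mk b := by
  ext n
  rw [PowerSeries.coeff_mul, Finset.Nat.sum_antidiagonal_eq_sum_range_succ_mk]
  simp only [convolution, PowerSeries.coeff_mk]

theorem Polynomial.coeff_mul_eq_convolution (P Q : A[X]) :
    (P * Q).coeff = convolution P.coeff Q.coeff := by
  ext n
  rw [Polynomial.coeff_mul, Finset.Nat.sum_antidiagonal_eq_sum_range_succ_mk, convolution]

theorem convolution_eq_zero_of_ge {a b : ℕ → A} {N M : ℕ} (ha : ∀ n ≥ N, a n = 0)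
    (hb : ∀ n ≥ M, b n = 0) (n : ℕ) (hn : n ≥ N + M) : convolution a b n = 0 := by
  refine Finset.sum_eq_zero fun i _ => ?_
  rcases le_or_gt N i with h | h
  · rw [ha i h, zero_mul]
  · rw [hb (n - i) (by omega), mul_zero]

theorem exists_polynomial_coeff_eq {a : ℕ → A} (ha : ∃ N, ∀ n ≥ N, a n = 0) :
    ∃ P : A[X], P.coeff = a := by
  obtain ⟨N, hN⟩ := ha
  refine ⟨trunc N (mk a), funext fun n => ?_⟩
  rw [coeff_trunc, PowerSeries.coeff_mk]
  split_ifs with h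
  · rfl
  · exact (hN n (not_lt.mp h)).symm

theorem Polynomial.hasseDeriv_eq_C_coeff_mul_iff (P : A[X]) :
    (∀ n, hasseDeriv n P = Polynomial.C (P.coeff n) * P) ↔
      ∀ n m : ℕ, ((n + m).choose n : A) * P.coeff (n + m) = P.coeff n * P.coeff m := by
  simp only [Polynomial.ext_iff, hasseDeriv_coeff, Polynomial.coeff_C_mul]
  exact forall_congr' fun n => forall_congr' fun m => by rw [add_comm m n]

theorem Polynomial.hasseDeriv_mul_eq_C_coeff_mul {P Q : A[X]}
    (hP : ∀ n, hasseDeriv n P = Polynomial.C (P.coeff n) * P)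
    (hQ : ∀ n, hasseDeriv n Q = Polynomial.C (Q.coeff n) * Q) (n : ℕ) :
    hasseDeriv n (P * Q) = Polynomial.C ((P * Q).coeff n) * (P * Q) := by
  simp only [hasseDeriv_mul, hP, hQ, Polynomial.coeff_mul, map_sum, Finset.sum_mul, map_mul]
  exact Finset.sum_congr rfl fun _ _ => by ring

theorem choose_mul_convolution {a b : ℕ → A}
    (ha : ∀ n m : ℕ, ((n + m).choose n : A) * a (n + m) = a n * a m)
    (hb : ∀ n m : ℕ, ((n + m).choose n : A) * b (n + m) = b n * b m)
    (ha' : ∃ N, ∀ n ≥ N, a n = 0) (hb' : ∃ N, ∀ n ≥ N, b n = 0) (n m : ℕ) :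
    ((n + m).choose n : A) * convolution a b (n + m) = convolution a b n * convolution a b m := by
  obtain ⟨P, rfl⟩ := exists_polynomial_coeff_eq ha'
  obtain ⟨Q, rfl⟩ := exists_polynomial_coeff_eq hb'
  rw [← hasseDeriv_eq_C_coeff_mul_iff] at ha hb
  rw [← coeff_mul_eq_convolution]
  exact (hasseDeriv_eq_C_coeff_mul_iff _).mp (hasseDeriv_mul_eq_C_coeff_mul ha hb) n m

theorem choose_mul_pow_mul {a : ℕ → A}
    (ha : ∀ n m : ℕ, ((n + m).choose n : A) * a (n + m) = a n * a m) (u : A) (n m : ℕ) :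
    ((n + m).choose n : A) * (u ^ (n + m) * a (n + m)) = u ^ n * a n * (u ^ m * a m) := by
  linear_combination u ^ (n + m) * ha n m

theorem PowerSeries.rescale_add_mk {a : ℕ → A}
    (ha : ∀ n m : ℕ, ((n + m).choose n : A) * a (n + m) = a n * a m) (u v : A) :
    rescale (u + v) (mk a) = rescale u (mk a) * rescale v (mk a) := by
  ext n
  rw [PowerSeries.coeff_mul, coeff_rescale, (Commute.all u v).add_pow', Finset.sum_mul]
  refine Finset.sum_congr rfl fun ⟨i, j⟩ hij => ?_
  obtain rfl : i + j = n := Finset.HasAntidiagonal.mem_antidiagonal.mp hij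
  simp only [coeff_rescale, PowerSeries.coeff_mk, nsmul_eq_mul]
  linear_combination u ^ i * v ^ j * ha i j

theorem PowerSeries.mk_mul_rescale_neg_one {a : ℕ → A} (ha0 : a 0 = 1)
    (ha : ∀ n m : ℕ, ((n + m).choose n : A) * a (n + m) = a n * a m) :
    mk a * rescale (-1) (mk a) = 1 :=
  calc mk a * rescale (-1) (mk a) = rescale (1 + -1) (mk a) := by
        rw [rescale_add_mk ha, rescale_one, RingHom.id_apply]
    _ = 1 := by simp [ha0]

end

theorem nilpotent_pd_sequences_abelian_group_general
    (A : Type*) [CommRing A]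
    (NPD : (ℕ → A) → Prop)
    (hNPD : NPD = fun a =>
      a 0 = 1 ∧ (∀ n m : ℕ, (Nat.choose (n + m) n : A) * a (n + m) = a n * a m) ∧
        ∃ N : ℕ, ∀ n ≥ N, a n = 0)
    (conv : (ℕ → A) → (ℕ → A) → (ℕ → A))
    (hconv : conv = fun a b n => ∑ i ∈ Finset.range (n + 1), a i * b (n - i))
    (e : ℕ → A) (he : e = fun n => if n = 0 then 1 else 0) :
    (∀ a b, NPD a → NPD b → NPD (conv a b)) ∧
      (∀ a b, conv a b = conv b a) ∧
      (∀ a b c, conv (conv a b) c = conv a (conv b c)) ∧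
      NPD e ∧
      (∀ a, NPD a → conv a e = a) ∧
      (∀ a, NPD a → ∃ b, NPD b ∧ conv a b = e) := by
  obtain rfl : conv = convolution := hconv
  have mk_e : mk e = 1 := by ext n; simp [he, PowerSeries.coeff_one]
  subst hNPD
  refine ⟨?_, fun a b => ?_, fun a b c => ?_, ?_, fun a _ => ?_, ?_⟩
  · rintro a b ⟨ha0, ha, N, hN⟩ ⟨hb0, hb, M, hM⟩
    exact ⟨by simp [convolution, ha0, hb0], choose_mul_convolution ha hb ⟨N, hN⟩ ⟨M, hM⟩,
      N + M, convolution_eq_zero_of_ge hN hM⟩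
  · exact mk_injective (by simp only [mk_convolution, mul_comm])
  · exact mk_injective (by simp only [mk_convolution, mul_assoc])
  · subst he
    refine ⟨if_pos rfl, fun n m => ?_, 1, fun n hn => if_neg (by omega)⟩
    rcases n with _ | n <;> rcases m with _ | m <;> simp
  · exact mk_injective (by rw [mk_convolution, mk_e, mul_one])
  · rintro a ⟨ha0, ha, N, hN⟩
    refine ⟨fun n => (-1) ^ n * a n, ⟨by simp [ha0], choose_mul_pow_mul ha (-1), N,
      fun n hn => by simp [hN n hn]⟩, mk_injective ?_⟩
    rw [mk_convolution, mk_e, ← rescale_mk, mk_mul_rescale_neg_one ha0 ha]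

/-- Nilpotent divided power sequences in a commutative ring of characteristic `p`
form an abelian group under convolution `(a + b)_n = ∑_{i+j=n} a_i b_j`. -/
theorem nilpotent_pd_sequences_abelian_group {p : ℕ} (hp : p.Prime)
    (A : Type*) [CommRing A] [CharP A p]
    (NPD : (ℕ → A) → Prop)
    (hNPD : NPD = fun a =>
      a 0 = 1 ∧ (∀ n m : ℕ, (Nat.choose (n + m) n : A) * a (n + m) = a n * a m) ∧
        ∃ N : ℕ, ∀ n ≥ N, a n = 0)
    (conv : (ℕ → A) → (ℕ → A) → (ℕ → A))
    (hconv : conv = fun a b n => ∑ i ∈ Finset.range (n + 1), a i * b (n - i))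
    (e : ℕ → A) (he : e = fun n => if n = 0 then 1 else 0) :
    (∀ a b, NPD a → NPD b → NPD (conv a b)) ∧
      (∀ a b, conv a b = conv b a) ∧
      (∀ a b c, conv (conv a b) c = conv a (conv b c)) ∧
      NPD e ∧
      (∀ a, NPD a → conv a e = a) ∧
      (∀ a, NPD a → ∃ b, NPD b ∧ conv a b = e) :=
  nilpotent_pd_sequences_abelian_group_general A NPD hNPD conv hconv e he
end

section
/- Let k be a field of characteristic p and M a module over k[x] equipped with a connection ∇: a k-linear map ∇ : M → M satisfying ∇(x·s) = s + x·∇(s) for all s ∈ M (the Leibniz rule for d/dx). Then the p-th iterate ∇^p : M → M is k[x]-linear: ∇^p(f·s) = f·∇^p(s) for all f ∈ k[x] and s ∈ M. -/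
/-!
Write `ξ` for multiplication by `x` on `M`. The Leibniz rule says `∇ξ = 1 + ξ∇` in `End_k M`, and
then `∇ⁿ⁺¹ξ = (n + 1)∇ⁿ + ξ∇ⁿ⁺¹` by induction. For `n + 1 = p` the first term vanishes, so `∇ᵖ`
commutes with `ξ`, hence with multiplication by every polynomial in `x`.
-/

open Polynomial

theorem pow_succ_mul_eq_of_mul_eq_one_add_mul {A : Type*} [Semiring A] {d x : A}
    (h : d * x = 1 + x * d) (n : ℕ) :
    d ^ (n + 1) * x = (n + 1 : ℕ) * d ^ n + x * d ^ (n + 1) := by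
  induction n with
  | zero => simpa using h
  | succ n ih =>
    calc d ^ (n + 2) * x = d * (d ^ (n + 1) * x) := by rw [← mul_assoc, ← pow_succ']
      _ = (n + 1 : ℕ) * d ^ (n + 1) + d * x * d ^ (n + 1) := by
        rw [ih, mul_add, ← mul_assoc, ← mul_assoc, ← Nat.cast_comm, mul_assoc, ← pow_succ']
      _ = (n + 2 : ℕ) * d ^ (n + 1) + x * d ^ (n + 2) := by
        rw [h, add_mul, one_mul, mul_assoc, ← pow_succ', ← add_assoc, Nat.cast_succ (n + 1),
          add_one_mul]

theorem commute_pow_of_mul_eq_one_add_mul {A : Type*} [Semiring A] {d x : A} {p : ℕ}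
    (hp : (p : A) = 0) (h : d * x = 1 + x * d) : Commute (d ^ p) x := by
  cases p with
  | zero => exact pow_zero d ▸ Commute.one_left x
  | succ n =>
    rw [Commute, SemiconjBy, pow_succ_mul_eq_of_mul_eq_one_add_mul h, hp, zero_mul, zero_add]

theorem commute_lsmul_of_commute_lsmul_X {R M : Type*} [CommSemiring R] [AddCommMonoid M]
    [Module R M] [Module R[X] M] [IsScalarTower R R[X] M] {T : Module.End R M}
    (hT : Commute T (Algebra.lsmul R R M (X : R[X]))) (f : R[X]) :
    Commute T (Algebra.lsmul R R M f) := by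
  have hX : (X : R[X]) ∈ (Subalgebra.centralizer R {T}).comap (Algebra.lsmul R R M) := by
    simpa [Subalgebra.mem_centralizer_iff] using hT.eq
  have hf : f ∈ (Subalgebra.centralizer R {T}).comap (Algebra.lsmul R R M) :=
    Algebra.adjoin_le (Set.singleton_subset_iff.mpr hX) (adjoin_X (R := R) ▸ Algebra.mem_top)
  simpa [Subalgebra.mem_centralizer_iff, Commute, SemiconjBy] using hf

theorem p_curvature_is_linear_general {p : ℕ} (k : Type*) [Field k] [CharP k p]
    (M : Type*) [AddCommGroup M] [Module (Polynomial k) M] [Module k M]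
    [IsScalarTower k (Polynomial k) M]
    (D : Module.End k M)
    (hL : ∀ s : M, D ((X : Polynomial k) • s) = s + (X : Polynomial k) • D s) :
    ∀ (f : Polynomial k) (s : M), (D ^ p) (f • s) = f • (D ^ p) s := by
  intro f s
  have hLeibniz : D * Algebra.lsmul k k M (X : k[X]) = 1 + Algebra.lsmul k k M (X : k[X]) * D :=
    LinearMap.ext hL
  have hp : (p : Module.End k M) = 0 := by
    rw [← map_natCast (algebraMap k _), CharP.cast_eq_zero, map_zero]
  exact LinearMap.congr_fun
    (commute_lsmul_of_commute_lsmul_X (commute_pow_of_mul_eq_one_add_mul hp hLeibniz) f) s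

/-- The `p`-curvature `D^p` of a connection `D` on a `k[x]`-module (for `d/dx`)
is `k[x]`-linear. -/
theorem p_curvature_is_linear {p : ℕ} (hp : p.Prime) (k : Type*) [Field k] [CharP k p]
    (M : Type*) [AddCommGroup M] [Module (Polynomial k) M] [Module k M]
    [IsScalarTower k (Polynomial k) M]
    (D : Module.End k M)
    (hL : ∀ s : M, D ((X : Polynomial k) • s) = s + (X : Polynomial k) • D s) :
    ∀ (f : Polynomial k) (s : M), (D ^ p) (f • s) = f • (D ^ p) s :=
  p_curvature_is_linear_general k M D hL
end
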